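/- Monotonicity of the EM algorithm: let (Ω, F) be a measurable space, G a sub-σ-algebra of F, P a reference probability measure, and (P_n)_{n≥0} a sequence of probability measures on (Ω, F), each equivalent to P. Assume for every n that log(dP_{n+1}/dP_n) is P_n-integrable and that E_{P_n}[ log(dP_{n+1}/dP_n) | G ] ≥ 0 P-almost everywhere. Then for every n, E_P[ dP_{n+1}/dP | G ] ≥ E_P[ dP_n/dP | G ] P-almost everywhere; in particular the partial-observation log-likelihoods log E_P[ dP_n/dP | G ] are P-a.e. nondecreasing in n. -/

import Mathlib

/-!
Write `r = dP_{n+1}/dP_n`. Since `log r ≤ r - 1`, the hypothesis `E_{P_n}[log r | G] ≥ 0` forces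
`E_{P_n}[r | G] ≥ 1`, and integrating over `G`-measurable sets gives `P_n ≤ P_{n+1}` on `G`.
The conditional likelihood `E_P[dP_n/dP | G]` is the Radon–Nikodym derivative of `P_n|_G` with
respect to `P|_G`, hence it is monotone in `P_n`, and it is positive because `P ≪ P_n`.
-/

open MeasureTheory Filter

namespace MeasureTheory

variable {Ω : Type*} {m m0 : MeasurableSpace Ω}

lemma one_le_condExp_of_condExp_log_nonneg (hm : m ≤ m0) {μ : Measure[m0] Ω} [IsFiniteMeasure μ]
    {f : Ω → ℝ} (hf_pos : ∀ᵐ x ∂μ, 0 < f x) (hf : Integrable f μ)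
    (hf_log : Integrable (fun x ↦ Real.log (f x)) μ)
    (h : 0 ≤ᵐ[μ] μ[fun x ↦ Real.log (f x) | m]) :
    ∀ᵐ x ∂μ, 1 ≤ μ[f | m] x := by
  have h_log_le : (fun x ↦ Real.log (f x)) ≤ᵐ[μ] f - fun _ ↦ 1 :=
    hf_pos.mono fun x hx ↦ Real.log_le_sub_one_of_pos hx
  filter_upwards [h, condExp_mono hf_log (hf.sub (integrable_const 1)) h_log_le,
    condExp_sub hf (integrable_const (1 : ℝ)) m] with x h0 h_mono h_sub
  rw [h_sub, condExp_const hm] at h_mono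
  simp only [Pi.sub_apply, Pi.zero_apply] at h0 h_mono
  linarith [h0.trans h_mono]

namespace Measure

lemma trim_le_of_one_le_condExp_toReal_rnDeriv (hm : m ≤ m0) {μ ν : Measure[m0] Ω}
    [IsFiniteMeasure μ] [IsFiniteMeasure ν] (hμν : μ ≪ ν)
    (h : ∀ᵐ x ∂ν, 1 ≤ ν[fun x ↦ (μ.rnDeriv ν x).toReal | m] x) :
    ν.trim hm ≤ μ.trim hm := by
  refine Measure.le_iff.2 fun s hs ↦ ?_
  rw [trim_measurableSet_eq hm hs, trim_measurableSet_eq hm hs,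
    ← ENNReal.toReal_le_toReal (measure_ne_top _ _) (measure_ne_top _ _)]
  calc (ν s).toReal = ∫ _ in s, (1 : ℝ) ∂ν := by simp [measureReal_def]
    _ ≤ ∫ x in s, ν[fun x ↦ (μ.rnDeriv ν x).toReal | m] x ∂ν :=
      setIntegral_mono_ae (integrable_const 1).integrableOn integrable_condExp.integrableOn h
    _ = ∫ x in s, (μ.rnDeriv ν x).toReal ∂ν := setIntegral_condExp hm integrable_toReal_rnDeriv hs
    _ = (μ s).toReal := setIntegral_toReal_rnDeriv hμν s

lemma trim_le_of_condExp_log_rnDeriv_nonneg (hm : m ≤ m0) {μ ν : Measure[m0] Ω}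
    [IsFiniteMeasure μ] [IsFiniteMeasure ν] (hμν : μ ≪ ν) (hνμ : ν ≪ μ)
    (h_int : Integrable (fun x ↦ Real.log (μ.rnDeriv ν x).toReal) ν)
    (h : 0 ≤ᵐ[ν] ν[fun x ↦ Real.log (μ.rnDeriv ν x).toReal | m]) :
    ν.trim hm ≤ μ.trim hm := by
  have h_pos : ∀ᵐ x ∂ν, 0 < (μ.rnDeriv ν x).toReal := by
    filter_upwards [rnDeriv_pos' hνμ, rnDeriv_lt_top μ ν] with x h0 htop
    exact ENNReal.toReal_pos h0.ne' htop.ne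
  exact trim_le_of_one_le_condExp_toReal_rnDeriv hm hμν
    (one_le_condExp_of_condExp_log_nonneg hm h_pos integrable_toReal_rnDeriv h_int h)

lemma rnDeriv_le_rnDeriv_of_le {μ ν ρ : Measure[m0] Ω} [SigmaFinite ν] [SigmaFinite ρ]
    (hνρ : ν ≪ ρ) (h : μ ≤ ν) : μ.rnDeriv ρ ≤ᵐ[ρ] ν.rnDeriv ρ :=
  ae_le_of_forall_setLIntegral_le_of_sigmaFinite (measurable_rnDeriv μ ρ) fun s _ _ ↦
    calc ∫⁻ x in s, μ.rnDeriv ρ x ∂ρ ≤ μ s := setLIntegral_rnDeriv_le s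
      _ ≤ ν s := h s
      _ = ∫⁻ x in s, ν.rnDeriv ρ x ∂ρ := (setLIntegral_rnDeriv hνρ s).symm

end Measure

lemma condExp_toReal_rnDeriv_mono (hm : m ≤ m0) {μ ν ρ : Measure[m0] Ω} [IsFiniteMeasure μ]
    [IsFiniteMeasure ν] [IsFiniteMeasure ρ] (hμρ : μ ≪ ρ) (hνρ : ν ≪ ρ)
    (h : μ.trim hm ≤ ν.trim hm) :
    ρ[fun x ↦ (μ.rnDeriv ρ x).toReal | m] ≤ᵐ[ρ] ρ[fun x ↦ (ν.rnDeriv ρ x).toReal | m] := by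
  refine ae_of_ae_trim hm ?_
  filter_upwards [toReal_rnDeriv_trim hm hμρ, toReal_rnDeriv_trim hm hνρ,
    Measure.rnDeriv_le_rnDeriv_of_le (hνρ.trim hm) h,
    Measure.rnDeriv_lt_top (ν.trim hm) (ρ.trim hm)] with x hμ hν hle htop
  rw [← hμ, ← hν]
  exact ENNReal.toReal_mono htop.ne hle

lemma condExp_toReal_rnDeriv_pos (hm : m ≤ m0) {μ ρ : Measure[m0] Ω} [IsFiniteMeasure μ]
    [IsFiniteMeasure ρ] (hμρ : μ ≪ ρ) (hρμ : ρ ≪ μ) :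
    ∀ᵐ x ∂ρ, 0 < ρ[fun x ↦ (μ.rnDeriv ρ x).toReal | m] x := by
  refine ae_of_ae_trim hm ?_
  filter_upwards [toReal_rnDeriv_trim hm hμρ, Measure.rnDeriv_pos' (hρμ.trim hm),
    Measure.rnDeriv_lt_top (μ.trim hm) (ρ.trim hm)] with x hx h0 htop
  rw [← hx]
  exact ENNReal.toReal_pos h0.ne' htop.ne

end MeasureTheory

/-- monotonicity of the EM algorithm: if each EM step does not decrease
the conditional expected log-likelihood ratio, then the partial-observation
(conditional) likelihoods are nondecreasing. -/
theorem em_monotone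
    {Ω : Type*} {F : MeasurableSpace Ω} (G : MeasurableSpace Ω) (hG : G ≤ F)
    (Pref : @Measure Ω F) [IsProbabilityMeasure Pref]
    (P : ℕ → @Measure Ω F) [∀ n, IsProbabilityMeasure (P n)]
    (hPac : ∀ n, P n ≪ Pref) (hacP : ∀ n, Pref ≪ P n)
    (hint : ∀ n,
      Integrable (fun ω => Real.log (((P (n+1)).rnDeriv (P n) ω).toReal)) (P n))
    (hstep : ∀ n, ∀ᵐ ω ∂Pref,
      0 ≤ ((P n)[fun ω => Real.log (((P (n+1)).rnDeriv (P n) ω).toReal) | G]) ω) :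
    ∀ n, ∀ᵐ ω ∂Pref,
      (Pref[fun ω => ((P n).rnDeriv Pref ω).toReal | G]) ω
          ≤ (Pref[fun ω => ((P (n+1)).rnDeriv Pref ω).toReal | G]) ω
        ∧ Real.log ((Pref[fun ω => ((P n).rnDeriv Pref ω).toReal | G]) ω)
          ≤ Real.log ((Pref[fun ω => ((P (n+1)).rnDeriv Pref ω).toReal | G]) ω) := by
  intro n
  have h_trim : (P n).trim hG ≤ (P (n + 1)).trim hG :=
    Measure.trim_le_of_condExp_log_rnDeriv_nonneg hG ((hPac (n + 1)).trans (hacP n))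
      ((hPac n).trans (hacP (n + 1))) (hint n) ((hPac n).ae_le (hstep n))
  filter_upwards [condExp_toReal_rnDeriv_mono hG (hPac n) (hPac (n + 1)) h_trim,
    condExp_toReal_rnDeriv_pos hG (hPac n) (hacP n)] with ω h_le h_pos
  exact ⟨h_le, Real.log_le_log h_pos h_le⟩
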